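/- For all natural numbers n ≥ 1 and m ≥ 3, there exists a dominating broadcast on the sunlet graph with degree n, S_m^n, that has exactly one broadcast vertex, this vertex is a base vertex, its strength is ⌊m/2⌋ + n, and the cost of the broadcast equals the radius of S_m^n. -/

import Mathlib

/-!
Broadcast with strength `⌊m/2⌋ + n` from a base vertex: every vertex reaches it by walking down
its branch (at most `n` steps) and then at most `⌊m/2⌋` steps around the cycle, so this broadcast
dominates and the base vertex has eccentricity at most `⌊m/2⌋ + n`. Conversely, from any vertex
`(i, j)` the tip of the branch at the base vertex antipodal to `i` is at distance at least
`⌊m/2⌋ + n`, which is seen by evaluating a 1-Lipschitz potential, the closed form of the distance to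
that tip. So every eccentricity is at least `⌊m/2⌋ + n`, and the radius, the eccentricity of the
base vertex and the cost of the broadcast all equal `⌊m/2⌋ + n`.
-/

open SimpleGraph Finset

/-- A dominating broadcast on `G`: every vertex is within distance `f u` of some
vertex `u` with `f u ≥ 1` (distances are measured by the graph metric `G.dist`). -/
def IsDominatingBroadcast {V : Type*} (G : SimpleGraph V) (f : V → ℕ) : Prop :=
  ∀ v : V, ∃ u : V, 1 ≤ f u ∧ G.dist u v ≤ f u

/-- The sunlet graph with degree `n` on the cycle `C_m`, `S_m^n`: a path on `n`
new vertices (a branch) is attached to each vertex of the cycle `C_m`.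
The vertex `(i, 0)` is the `i`-th base vertex (on the cycle) and, for
`1 ≤ j ≤ n`, the vertex `(i, j)` is the `j`-th pendant vertex of the branch
attached at `(i, 0)`. -/
def sunletDeg (m n : ℕ) : SimpleGraph (Fin m × Fin (n + 1)) :=
  SimpleGraph.fromRel (fun a b =>
    (a.2 = 0 ∧ b.2 = 0 ∧ (SimpleGraph.cycleGraph m).Adj a.1 b.1) ∨
    (a.1 = b.1 ∧ (a.2 : ℕ) + 1 = (b.2 : ℕ)))

/-- The eccentricity of a vertex: the maximum distance from `v` to any vertex. -/
noncomputable def eccentricity {V : Type*} [Fintype V] (G : SimpleGraph V) (v : V) : ℕ :=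
  Finset.univ.sup fun u => G.dist u v

/-- The radius of a graph: the minimum eccentricity over all vertices. -/
noncomputable def graphRadius (V : Type*) [Fintype V] (G : SimpleGraph V) : ℕ :=
  sInf {e : ℕ | ∃ v : V, eccentricity G v = e}

open scoped Fin.NatCast Fin.CommRing

namespace SimpleGraph

variable {V : Type*} {G : SimpleGraph V}

theorem Walk.le_add_length_of_adj_le {g : V → ℕ} (hg : ∀ x y, G.Adj x y → g x ≤ g y + 1)
    {u v : V} (w : G.Walk u v) : g u ≤ g v + w.length := by
  induction w with
  | nil => simp
  | cons h _ ih => have := hg _ _ h; rw [Walk.length_cons]; omega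

theorem Reachable.le_add_dist_of_adj_le {g : V → ℕ} (hg : ∀ x y, G.Adj x y → g x ≤ g y + 1)
    {u v : V} (h : G.Reachable u v) : g u ≤ g v + G.dist u v := by
  obtain ⟨w, hw⟩ := h.exists_walk_length_eq_dist
  exact hw ▸ w.le_add_length_of_adj_le hg

end SimpleGraph

section Radius

variable {V : Type*} [Fintype V] {G : SimpleGraph V}

theorem dist_le_eccentricity (u v : V) : G.dist u v ≤ eccentricity G v :=
  Finset.le_sup (f := fun u => G.dist u v) (mem_univ u)

theorem eccentricity_le_iff {v : V} {r : ℕ} : eccentricity G v ≤ r ↔ ∀ u, G.dist u v ≤ r := by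
  simp [eccentricity]

theorem graphRadius_eq_of_forall_le {v : V} {r : ℕ} (hv : eccentricity G v = r)
    (h : ∀ w, r ≤ eccentricity G w) : graphRadius V G = r := by
  refine le_antisymm (Nat.sInf_le ⟨v, hv⟩) (le_csInf ⟨r, v, hv⟩ ?_)
  rintro _ ⟨w, rfl⟩
  exact h w

end Radius

theorem isDominatingBroadcast_single {V : Type*} [DecidableEq V] {G : SimpleGraph V} {v : V}
    {r : ℕ} (hr : 1 ≤ r) (h : ∀ u, G.dist u v ≤ r) : IsDominatingBroadcast G (Pi.single v r) :=
  fun u => ⟨v, by simpa using hr, by simpa [dist_comm] using h u⟩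

namespace Fin

variable {m : ℕ}

/-- The graph distance of `cycleGraph m`, computed in `ZMod m` so that the triangle inequality
comes from `ZMod.valMinAbs`. -/
def cycleDist (x y : Fin m) : ℕ := ((x.val : ZMod m) - y.val).valMinAbs.natAbs

theorem natCast_val_sub (x y : Fin m) : (((x - y).val : ℕ) : ZMod m) = x.val - y.val := by
  rw [Fin.sub_def]
  simp only
  rw [ZMod.natCast_mod, Nat.cast_add, Nat.cast_sub y.isLt.le, ZMod.natCast_self]
  ring

@[simp]
theorem cycleDist_self (x : Fin m) : cycleDist x x = 0 := by
  simp [cycleDist]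

theorem cycleDist_triangle (x y z : Fin m) : cycleDist x z ≤ cycleDist x y + cycleDist y z := by
  unfold cycleDist
  rw [← sub_add_sub_cancel _ ((y.val : ℕ) : ZMod m)]
  exact (ZMod.natAbs_valMinAbs_add_le _ _).trans (Int.natAbs_add_le _ _)

theorem cycleDist_comm (x y : Fin m) : cycleDist x y = cycleDist y x := by
  rw [cycleDist, ← neg_sub, ZMod.natAbs_valMinAbs_neg, cycleDist]

theorem cycleDist_le_one_of_adj [NeZero m] {x y : Fin m} (h : (cycleGraph m).Adj x y) :
    cycleDist x y ≤ 1 := by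
  have key : ∀ x y : Fin m, (x - y).val = 1 → cycleDist x y ≤ 1 := by
    intro x y hxy
    rw [cycleDist, ← natCast_val_sub, hxy, Nat.cast_one, ZMod.valMinAbs_natAbs_eq_min]
    exact (min_le_left _ _).trans ((ZMod.val_one_eq_one_mod m).trans_le (Nat.mod_le 1 m))
  rcases cycleGraph_adj'.mp h with hxy | hyx
  · exact key x y hxy
  · exact cycleDist_comm x y ▸ key y x hyx

theorem exists_cycleDist_eq_half [NeZero m] (x : Fin m) : ∃ y, cycleDist x y = m / 2 := by
  refine ⟨⟨(x.val + m / 2) % m, Nat.mod_lt _ (NeZero.pos m)⟩, ?_⟩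
  rw [cycleDist, ZMod.natCast_mod, Nat.cast_add, sub_add_cancel_left,
    ZMod.natAbs_valMinAbs_neg, ZMod.valMinAbs_natCast_of_le_half le_rfl, Int.natAbs_natCast]

end Fin

section Sunlet

variable {m n : ℕ}

theorem sunletDeg_adj_branch (i : Fin m) (j : Fin n) :
    (sunletDeg m n).Adj (i, j.castSucc) (i, j.succ) := by
  rw [sunletDeg, fromRel_adj]
  refine ⟨fun h => ?_, Or.inl (Or.inr ⟨rfl, by simp⟩)⟩
  simpa [Fin.ext_iff] using congrArg (fun p => p.2.val) h

theorem sunletDeg_edist_branch_le (i : Fin m) (j : Fin (n + 1)) :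
    (sunletDeg m n).edist (i, j) (i, 0) ≤ j.val := by
  induction j using Fin.induction with
  | zero => simp
  | succ j ih =>
    calc (sunletDeg m n).edist (i, j.succ) (i, 0)
        ≤ (sunletDeg m n).edist (i, j.succ) (i, j.castSucc) +
            (sunletDeg m n).edist (i, j.castSucc) (i, 0) := SimpleGraph.edist_triangle
      _ ≤ 1 + j.val := by
          rw [SimpleGraph.edist_comm, edist_eq_one_iff_adj.mpr (sunletDeg_adj_branch i j)]
          gcongr
          simpa using ih
      _ = (j.succ.val : ℕ∞) := by simp [add_comm]

variable [NeZero m]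

theorem sunletDeg_adj_base_add_one (hm : 2 ≤ m) (k : Fin m) :
    (sunletDeg m n).Adj (k, 0) (k + 1, 0) := by
  have hone : ((k + 1) - k).val = 1 := by
    rw [add_sub_cancel_left, Fin.val_one', Nat.mod_eq_of_lt hm]
  rw [sunletDeg, fromRel_adj]
  refine ⟨fun h => ?_, Or.inl (Or.inl ⟨rfl, rfl, cycleGraph_adj'.mpr (Or.inr hone)⟩)⟩
  simp [show k + 1 = k from (congrArg Prod.fst h).symm] at hone

theorem sunletDeg_edist_base_add_le (hm : 2 ≤ m) (a : Fin m) (k : ℕ) :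
    (sunletDeg m n).edist (a, 0) (a + k, 0) ≤ k := by
  induction k with
  | zero => simp
  | succ k ih =>
    calc (sunletDeg m n).edist (a, 0) (a + (k + 1 : ℕ), 0)
        ≤ (sunletDeg m n).edist (a, 0) (a + k, 0) +
            (sunletDeg m n).edist (a + k, 0) (a + k + 1, 0) := by
          rw [Nat.cast_succ, ← add_assoc]; exact SimpleGraph.edist_triangle
      _ ≤ k + 1 := by
          rw [edist_eq_one_iff_adj.mpr (sunletDeg_adj_base_add_one hm _)]
          gcongr
      _ = ((k + 1 : ℕ) : ℕ∞) := by push_cast; rfl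

theorem sunletDeg_edist_base_le (hm : 2 ≤ m) (i : Fin m) :
    (sunletDeg m n).edist (i, 0) (0, 0) ≤ (m / 2 : ℕ) := by
  rcases le_or_gt i.val (m / 2) with hi | hi
  · have h := sunletDeg_edist_base_add_le (n := n) hm 0 i.val
    rw [zero_add, Fin.cast_val_eq_self, SimpleGraph.edist_comm] at h
    exact h.trans (by exact_mod_cast hi)
  · have h := sunletDeg_edist_base_add_le (n := n) hm i (m - i.val)
    rw [Nat.cast_sub i.isLt.le, Fin.natCast_self, Fin.cast_val_eq_self, add_sub_cancel] at h
    exact h.trans (by exact_mod_cast (by omega : m - i.val ≤ m / 2))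

theorem sunletDeg_edist_le (hm : 2 ≤ m) (v : Fin m × Fin (n + 1)) :
    (sunletDeg m n).edist v (0, 0) ≤ (m / 2 + n : ℕ) := by
  obtain ⟨i, j⟩ := v
  calc (sunletDeg m n).edist (i, j) (0, 0)
      ≤ (sunletDeg m n).edist (i, j) (i, 0) + (sunletDeg m n).edist (i, 0) (0, 0) :=
        SimpleGraph.edist_triangle
    _ ≤ n + (m / 2 : ℕ) := by
        gcongr
        · exact (sunletDeg_edist_branch_le i j).trans (by exact_mod_cast j.is_le)
        · exact sunletDeg_edist_base_le hm i
    _ = ((m / 2 + n : ℕ) : ℕ∞) := by push_cast; ring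

theorem sunletDeg_reachable_base_zero (hm : 2 ≤ m) (v : Fin m × Fin (n + 1)) :
    (sunletDeg m n).Reachable v (0, 0) :=
  reachable_of_edist_ne_top ((sunletDeg_edist_le hm v).trans_lt (ENat.natCast_lt_top _)).ne

theorem sunletDeg_dist_le (hm : 2 ≤ m) (v : Fin m × Fin (n + 1)) :
    (sunletDeg m n).dist v (0, 0) ≤ m / 2 + n := by
  have h := sunletDeg_edist_le hm v
  rwa [← (sunletDeg_reachable_base_zero hm v).coe_dist_eq_edist, Nat.cast_le] at h

end Sunlet

section TipPotential

variable {m n : ℕ}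

/-- The distance from the tip `(y, n)` of the branch at `y`, in closed form; only its
1-Lipschitz property is proved and used. -/
def tipPotential (n : ℕ) (y : Fin m) (p : Fin m × Fin (n + 1)) : ℕ :=
  if p.1 = y then n - p.2 else n + Fin.cycleDist p.1 y + p.2

theorem tipPotential_branch (y x : Fin m) {j j' : Fin (n + 1)} (hj : j.val + 1 = j'.val) :
    tipPotential n y (x, j) ≤ tipPotential n y (x, j') + 1 ∧
      tipPotential n y (x, j') ≤ tipPotential n y (x, j) + 1 := by
  have := j'.isLt
  dsimp only [tipPotential]
  split_ifs <;> omega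

variable [NeZero m]

theorem tipPotential_cycle (y : Fin m) {x x' : Fin m} (hx : (cycleGraph m).Adj x x') :
    tipPotential n y (x, 0) ≤ tipPotential n y (x', 0) + 1 := by
  have h := (Fin.cycleDist_triangle x x' y).trans
    (Nat.add_le_add_right (Fin.cycleDist_le_one_of_adj hx) _)
  simp only [tipPotential, Fin.val_zero, Nat.sub_zero, add_zero]
  split_ifs with hxy hx'y hx'y
  · exact absurd (hxy.trans hx'y.symm) hx.ne
  · omega
  · subst hx'y
    simp only [Fin.cycleDist_self] at h
    omega
  · omega

theorem tipPotential_le_of_adj (y : Fin m) {p q : Fin m × Fin (n + 1)}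
    (h : (sunletDeg m n).Adj p q) : tipPotential n y p ≤ tipPotential n y q + 1 := by
  obtain ⟨x, j⟩ := p
  obtain ⟨x', j'⟩ := q
  rw [sunletDeg, fromRel_adj] at h
  dsimp only at h
  obtain ⟨-, (⟨rfl, rfl, hx⟩ | ⟨rfl, hj⟩) | (⟨rfl, rfl, hx⟩ | ⟨rfl, hj⟩)⟩ := h
  · exact tipPotential_cycle y hx
  · exact (tipPotential_branch y _ hj).1
  · exact tipPotential_cycle y hx.symm
  · exact (tipPotential_branch y _ hj).2

theorem sunletDeg_exists_le_dist (hm : 2 ≤ m) (v : Fin m × Fin (n + 1)) :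
    ∃ u, m / 2 + n ≤ (sunletDeg m n).dist u v := by
  obtain ⟨i, j⟩ := v
  obtain ⟨y, hy⟩ := Fin.exists_cycleDist_eq_half i
  have hiy : i ≠ y := by
    rintro rfl
    simp only [Fin.cycleDist_self] at hy
    omega
  have hreach : (sunletDeg m n).Reachable (i, j) (y, Fin.last n) :=
    (sunletDeg_reachable_base_zero hm _).trans (sunletDeg_reachable_base_zero hm _).symm
  have h := hreach.le_add_dist_of_adj_le fun _ _ => tipPotential_le_of_adj y
  simp only [tipPotential, hiy, if_false, hy, if_true, Fin.val_last, Nat.sub_self] at h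
  exact ⟨(y, Fin.last n), by rw [dist_comm]; omega⟩

theorem sunletDeg_le_eccentricity (hm : 2 ≤ m) (v : Fin m × Fin (n + 1)) :
    m / 2 + n ≤ eccentricity (sunletDeg m n) v :=
  let ⟨u, hu⟩ := sunletDeg_exists_le_dist hm v
  hu.trans (dist_le_eccentricity u v)

end TipPotential

theorem sunletDeg_exists_single_broadcast_general (m n : ℕ) (hm : 3 ≤ m) :
    ∃ f : Fin m × Fin (n + 1) → ℕ,
      IsDominatingBroadcast (sunletDeg m n) f ∧
      ∃ v : Fin m × Fin (n + 1),
        (∀ u : Fin m × Fin (n + 1), 1 ≤ f u ↔ u = v) ∧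
        v.2 = 0 ∧ f v = m / 2 + n ∧
        ∑ u, f u = graphRadius (Fin m × Fin (n + 1)) (sunletDeg m n) := by
  have : NeZero m := ⟨by omega⟩
  have hm2 : 2 ≤ m := by omega
  have hdist := sunletDeg_dist_le (n := n) hm2
  have hecc : eccentricity (sunletDeg m n) (0, 0) = m / 2 + n :=
    le_antisymm (eccentricity_le_iff.mpr hdist) (sunletDeg_le_eccentricity hm2 _)
  refine ⟨Pi.single (0, 0) (m / 2 + n), isDominatingBroadcast_single (by omega) hdist, (0, 0),
    fun u => ?_, rfl, Pi.single_eq_same _ _, ?_⟩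
  · by_cases hu : u = (0, 0)
    · simp only [hu, Pi.single_eq_same, iff_true]
      omega
    · simp [hu]
  · rw [Finset.sum_pi_single', if_pos (mem_univ _),
      graphRadius_eq_of_forall_le hecc (sunletDeg_le_eccentricity hm2)]

/-- For all `n ≥ 1` and `m ≥ 3`, there is a dominating broadcast on `S_m^n`
with exactly one broadcast vertex; this vertex is a base vertex, its strength
is `⌊m/2⌋ + n`, and the cost of the broadcast equals the radius of `S_m^n`. -/
theorem sunletDeg_exists_single_broadcast (m n : ℕ) (hm : 3 ≤ m) (hn : 1 ≤ n) :
    ∃ f : Fin m × Fin (n + 1) → ℕ,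
      IsDominatingBroadcast (sunletDeg m n) f ∧
      ∃ v : Fin m × Fin (n + 1),
        (∀ u : Fin m × Fin (n + 1), 1 ≤ f u ↔ u = v) ∧
        v.2 = 0 ∧ f v = m / 2 + n ∧
        ∑ u, f u = graphRadius (Fin m × Fin (n + 1)) (sunletDeg m n) :=
  sunletDeg_exists_single_broadcast_general m n hm
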